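/- arXiv:1110.6824 — 2 statements merged into one kernel-verified Lean document; each statement's English description precedes it below -/
import Mathlib

section
/- The vectors (χ_0, χ_1, ..., χ_{⌊n/2⌋}) evaluated on all n-fold products of ℂP^1 and ℂP^2 (i.e., products (ℂP^1)^a × (ℂP^2)^b with a + 2b = n) span a space of dimension ⌊n/2⌋ + 1; equivalently, since χ_y(ℂP^1) = 1 - y and χ_y(ℂP^2) = 1 - y + y^2, the χ_y genera of such products, namely the polynomials (1-y)^a (1-y+y^2)^b for a+2b = n, are linearly independent over ℚ. -/
open Polynomial

/-- A family of nonzero polynomials with pairwise distinct trailing degrees is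
linearly independent. -/
lemma linearIndependent_of_natTrailingDegree_injective {ι : Type*}
    (f : ι → Polynomial ℚ) (hne : ∀ i, f i ≠ 0)
    (hinj : Function.Injective (fun i => (f i).natTrailingDegree)) :
    LinearIndependent ℚ f := by
  rw [linearIndependent_iff']
  intro s g hsum i hi
  by_contra hgi
  set t := s.filter (fun j => g j ≠ 0) with ht
  have hit : i ∈ t := Finset.mem_filter.2 ⟨hi, hgi⟩
  obtain ⟨j, hjt, hjmin⟩ := t.exists_min_image (fun j => (f j).natTrailingDegree) ⟨i, hit⟩
  have hjs : j ∈ s := (Finset.mem_filter.1 hjt).1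
  have hgj : g j ≠ 0 := (Finset.mem_filter.1 hjt).2
  set d := (f j).natTrailingDegree with hd
  have hcoeff : (∑ k ∈ s, g k • f k).coeff d = 0 := by rw [hsum]; simp
  rw [Polynomial.finset_sum_coeff] at hcoeff
  have hsum2 : ∑ k ∈ s, (g k • f k).coeff d = g j * (f j).coeff d := by
    rw [Finset.sum_eq_single j]
    · simp
    · intro k hks hkj
      by_cases hgk : g k = 0
      · simp [hgk]
      · have hkt : k ∈ t := Finset.mem_filter.2 ⟨hks, hgk⟩
        have h1 : d ≤ (f k).natTrailingDegree := hjmin k hkt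
        have h2 : d ≠ (f k).natTrailingDegree := fun h => hkj (hinj h.symm)
        have : (f k).coeff d = 0 :=
          Polynomial.coeff_eq_zero_of_lt_natTrailingDegree (lt_of_le_of_ne h1 h2)
        simp [this]
    · intro h; exact absurd hjs h
  rw [hsum2] at hcoeff
  have : (f j).coeff d ≠ 0 := Polynomial.coeff_natTrailingDegree_ne_zero.2 (hne j)
  exact hgj (by
    rcases mul_eq_zero.1 hcoeff with h | h
    · exact h
    · exact absurd h this)

/-- the polynomials (1-y)^a (1-y+y^2)^b with a + 2b = n are linearly
independent over ℚ. -/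
theorem products_linearly_independent (n : ℕ) :
    LinearIndependent ℚ (fun ab : {ab : ℕ × ℕ // ab.1 + 2 * ab.2 = n} =>
      (1 - Polynomial.X : Polynomial ℚ) ^ ab.val.1 *
        (1 - Polynomial.X + Polynomial.X ^ 2) ^ ab.val.2) := by
  set σ := (Polynomial.aeval (Polynomial.X + 1 : Polynomial ℚ) : Polynomial ℚ →ₐ[ℚ] Polynomial ℚ)
  apply LinearIndependent.of_comp (σ.toLinearMap)
  have hform : ∀ ab : {ab : ℕ × ℕ // ab.1 + 2 * ab.2 = n},
      σ ((1 - Polynomial.X : Polynomial ℚ) ^ ab.val.1 *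
        (1 - Polynomial.X + Polynomial.X ^ 2) ^ ab.val.2)
      = (-Polynomial.X) ^ ab.val.1 * (Polynomial.X ^ 2 + Polynomial.X + 1) ^ ab.val.2 := by
    intro ab
    simp only [σ, map_mul, map_pow, map_sub, map_add, map_one, Polynomial.aeval_X]
    ring
  have key : LinearIndependent ℚ (fun ab : {ab : ℕ × ℕ // ab.1 + 2 * ab.2 = n} =>
      (-Polynomial.X : Polynomial ℚ) ^ ab.val.1 *
        (Polynomial.X ^ 2 + Polynomial.X + 1) ^ ab.val.2) := by
    apply linearIndependent_of_natTrailingDegree_injective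
    · intro ab
      apply mul_ne_zero (pow_ne_zero _ (neg_ne_zero.2 Polynomial.X_ne_zero))
      apply pow_ne_zero
      intro h
      have := congrArg (fun p => Polynomial.coeff p 0) h
      simp at this
    · intro ab₁ ab₂ h
      have hq : ∀ b : ℕ, (((Polynomial.X : Polynomial ℚ) ^ 2 + Polynomial.X + 1) ^ b).natTrailingDegree
          = 0 := by
        intro b
        rw [Polynomial.natTrailingDegree_eq_zero]
        right
        rw [Polynomial.coeff_zero_eq_eval_zero]
        simp
      have hxa : ∀ a : ℕ, ((-Polynomial.X : Polynomial ℚ) ^ a).natTrailingDegree = a := by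
        intro a
        rcases Nat.even_or_odd a with he | ho
        · rw [he.neg_pow]; exact Polynomial.natTrailingDegree_X_pow a
        · rw [ho.neg_pow, Polynomial.natTrailingDegree_neg]
          exact Polynomial.natTrailingDegree_X_pow a
      have hmul : ∀ ab : {ab : ℕ × ℕ // ab.1 + 2 * ab.2 = n},
          ((-Polynomial.X : Polynomial ℚ) ^ ab.val.1 *
            (Polynomial.X ^ 2 + Polynomial.X + 1) ^ ab.val.2).natTrailingDegree
          = ab.val.1 := by
        intro ab
        rw [Polynomial.natTrailingDegree_mul, hxa, hq, add_zero]
        · exact pow_ne_zero _ (neg_ne_zero.2 Polynomial.X_ne_zero)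
        · apply pow_ne_zero
          intro hz
          have := congrArg (fun p => Polynomial.coeff p 0) hz
          simp at this
      simp only [hmul] at h
      -- h : ab₁.val.1 = ab₂.val.1
      have h2 : ab₁.val.2 = ab₂.val.2 := by
        have e1 := ab₁.prop
        have e2 := ab₂.prop
        omega
      exact Subtype.ext (Prod.ext h h2)
  have : (fun ab : {ab : ℕ × ℕ // ab.1 + 2 * ab.2 = n} =>
      σ.toLinearMap ((1 - Polynomial.X : Polynomial ℚ) ^ ab.val.1 *
        (1 - Polynomial.X + Polynomial.X ^ 2) ^ ab.val.2))
      = (fun ab : {ab : ℕ × ℕ // ab.1 + 2 * ab.2 = n} =>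
      (-Polynomial.X : Polynomial ℚ) ^ ab.val.1 *
        (Polynomial.X ^ 2 + Polynomial.X + 1) ^ ab.val.2) := by
    funext ab; exact hform ab
  rw [Function.comp_def, this]
  exact key
end

section
/- π(2m) > 1 + π(m) + (m+1) - 2 for m large: for every m ≥ 4, the number of partitions satisfies π(2m) > π(m) + m, showing that 𝒞_{2m} is strictly bigger than ℰ𝒫_{2m} + ℋ𝒯_{2m} (which has dimension at most (1 + π(m)) + (m+1) - 2). -/
/-!
A partition of `n` either contains the part `a` or not. Removing one copy of `a` puts the
former in bijection with the partitions of `n - a`; among the latter are the `n - 1` hooks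
`(b, 1, …, 1)` with `b ≠ a`, since `a ≥ 2`. Hence `π(n) ≥ π(n - a) + n - 1`, and `n = 2m`,
`a = m` gives `π(2m) ≥ π(m) + 2m - 1 > π(m) + m`.
-/

open Finset

namespace Nat.Partition

variable {n : ℕ}

def hook (i : Fin n) : n.Partition where
  parts := ((i : ℕ) + 1) ::ₘ Multiset.replicate (n - (i + 1)) 1
  parts_pos := by grind [Multiset.eq_of_mem_replicate]
  parts_sum := by
    simp only [Multiset.sum_cons, Multiset.sum_replicate, smul_eq_mul, mul_one]
    omega

theorem card_hook_parts (i : Fin n) : Multiset.card (hook i).parts = n - i := by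
  simp only [hook, Multiset.card_cons, Multiset.card_replicate]
  omega

theorem hook_injective : Function.Injective (hook : Fin n → n.Partition) := by
  intro i j hij
  have := congrArg (fun p : n.Partition => Multiset.card p.parts) hij
  simp only [card_hook_parts] at this
  omega

theorem mem_hook_parts {a : ℕ} (ha : 2 ≤ a) (i : Fin n) :
    a ∈ (hook i).parts ↔ (i : ℕ) + 1 = a := by
  simp only [hook, Multiset.mem_cons, Multiset.mem_replicate]
  omega

theorem sub_one_le_card_filter_notMem_parts {a : ℕ} (ha : 2 ≤ a) (han : a ≤ n) :
    n - 1 ≤ #{p : n.Partition | a ∉ p.parts} := by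
  calc n - 1 = #((univ : Finset (Fin n)).erase ⟨a - 1, by omega⟩) := by simp
    _ ≤ _ := by
      refine card_le_card_of_injOn hook (fun i hi => ?_) hook_injective.injOn
      simp only [coe_erase, Set.mem_sdiff_singleton, ← Fin.val_ne_iff] at hi
      simp only [coe_filter, mem_univ, true_and, Set.mem_ofPred_eq, mem_hook_parts ha]
      omega

theorem card_sub_add_sub_one_le_card {a : ℕ} (ha : 2 ≤ a) (han : a ≤ n) :
    Fintype.card (n - a).Partition + (n - 1) ≤ Fintype.card n.Partition := by
  have hmem : #{p : n.Partition | a ∈ p.parts} = Fintype.card (n - a).Partition := by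
    rw [← Fintype.card_subtype]
    exact Fintype.card_congr (partitionWithPartEquiv (by omega) han)
  calc Fintype.card (n - a).Partition + (n - 1)
      ≤ #{p : n.Partition | a ∈ p.parts} + #{p : n.Partition | a ∉ p.parts} := by
        rw [hmem]; exact Nat.add_le_add_left (sub_one_le_card_filter_notMem_parts ha han) _
    _ = Fintype.card n.Partition := card_filter_add_card_filter_not _

end Nat.Partition

/-- for all m ≥ 4, the number of partitions satisfies
π(2m) > π(m) + m. -/
theorem partitions_double_gt (m : ℕ) (hm : 4 ≤ m) :
    Fintype.card (Nat.Partition (2 * m)) > Fintype.card (Nat.Partition m) + m := by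
  have h := Nat.Partition.card_sub_add_sub_one_le_card (n := 2 * m) (a := m) (by omega) (by omega)
  rw [show 2 * m - m = m by omega] at h
  omega
end
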